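/- For all α > 0, θ > 0, every natural number n, and every x > 0, the tail moment of the EXGD satisfies ∫_x^∞ t^n f(t; α, θ) dt = (α θ²/(1+θ)) [ L₁(α, θ, n, θ, x) + (θ/2) L₂(α, θ, n, θ, x) ], where L₁(a,b,c,δ,t) = Σ_{i=0}^∞ Σ_{j=0}^{i} Σ_{k=0}^{j} Σ_{l=0}^{k} C(a−1,i) C(i,j) C(j,k) C(k,l) (−1)^i b^j (b/2)^l Γ(c+k+l+1, t(bi+δ)) / [ (1+b)^i (bi+δ)^{c+k+l+1} ] and L₂(a,b,c,δ,t) = L₁(a,b,c+2,δ,t). Consequently the conditional moment E(Xⁿ | X > x) equals this quantity divided by 1 − [U(x;θ)]^α. -/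

import Mathlib

open Real MeasureTheory Set Filter Topology

/-- The xgamma CDF bracket: `U θ x = 1 - (1 + θ + θx + θ²x²/2) e^{-θx}/(1+θ)`. -/
noncomputable def U (θ x : ℝ) : ℝ :=
  1 - (1 + θ + θ * x + θ ^ 2 * x ^ 2 / 2) * Real.exp (-θ * x) / (1 + θ)

/-- The PDF of the exponentiated xgamma distribution EXGD(α, θ). -/
noncomputable def exgdPdf (α θ x : ℝ) : ℝ :=
  α * θ ^ 2 / (1 + θ) * (1 + θ * x ^ 2 / 2) * Real.exp (-θ * x) * (U θ x) ^ (α - 1)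

/-- Generalized binomial coefficient `C(a, i) = a(a-1)⋯(a-i+1)/i!`. -/
noncomputable def genChoose (a : ℝ) (i : ℕ) : ℝ :=
  (∏ j ∈ Finset.range i, (a - j)) / (Nat.factorial i)

/-- Upper incomplete gamma function `Γ(s, x) = ∫_x^∞ u^{s-1} e^{-u} du`. -/
noncomputable def uGamma (s x : ℝ) : ℝ :=
  ∫ u in Set.Ioi x, u ^ (s - 1) * Real.exp (-u)

/-- `L₁(a,b,c,δ,t)` of Lemma 2, as the sum of its series. -/
noncomputable def L1 (a b c δ t : ℝ) : ℝ :=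
  ∑' i : ℕ,
    ∑ j ∈ Finset.range (i + 1), ∑ k ∈ Finset.range (j + 1), ∑ l ∈ Finset.range (k + 1),
      genChoose (a - 1) i * (i.choose j) * (j.choose k) * (k.choose l) *
        (-1 : ℝ) ^ i * b ^ j * (b / 2) ^ l *
        uGamma (c + k + l + 1) (t * (b * i + δ)) /
        ((1 + b) ^ i * (b * i + δ) ^ (c + (k : ℝ) + l + 1))

/-- `L₂(a,b,c,δ,t) = L₁(a,b,c+2,δ,t)`. -/
noncomputable def L2 (a b c δ t : ℝ) : ℝ := L1 a b (c + 2) δ t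

/-!
Write `U θ = 1 - S` with `S = xgammaSurvival θ`, which decreases strictly from `S 0 = 1` (its
derivative is minus the xgamma density). For `t > 0` the binomial series gives
`U^(α-1) = ∑ C(α-1,i) (-S)^i`, and for `t > x` its terms are dominated by `|C(α-1,i)| (S x)^i`
with `S x < 1`, so the series may be integrated term by term against `t^m e^{-θt}`. Expanding
`(1 + θ + θt + θ²t²/2)^i` binomially three times turns each term into a finite sum of integrals
`∫_x^∞ t^p e^{-θ(i+1)t} dt = Γ(p+1, θ(i+1)x) / (θ(i+1))^(p+1)`: these are the summands of `L₁`.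
The factor `1 + θt²/2` of the density splits the moment into `L₁` (power `n`) and
`θ/2 · L₂` (power `n + 2`).
-/

theorem genChoose_eq_ringChoose (a : ℝ) (i : ℕ) : genChoose a i = Ring.choose a i := by
  rw [genChoose, Ring.choose_eq_smul, ← descPochhammer_eval_eq_prod_range,
    ← descPochhammer_map (algebraMap ℤ ℝ), Polynomial.eval_map_algebraMap,
    ← Polynomial.aeval_eq_smeval, smul_eq_mul, inv_mul_eq_div]

theorem hasSum_genChoose_mul_pow (a : ℝ) {s : ℝ} (hs : |s| < 1) :
    HasSum (fun i => genChoose a i * s ^ i) ((1 + s) ^ a) := by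
  have hs' : s ∈ Metric.eball 0 1 := by
    rw [Metric.mem_eball, edist_zero_right, ← ofReal_norm]
    exact ENNReal.ofReal_lt_one.mpr hs
  simpa [binomialSeries, FormalMultilinearSeries.ofScalars_apply_eq, genChoose_eq_ringChoose,
    mul_comm] using (one_add_rpow_hasFPowerSeriesOnBall_zero (a := a)).hasSum hs'

theorem summable_abs_genChoose_mul_pow (a : ℝ) {q : ℝ} (hq₀ : 0 ≤ q) (hq₁ : q < 1) :
    Summable (fun i => |genChoose a i| * q ^ i) := by
  lift q to NNReal using hq₀
  have := (binomialSeries ℝ a).summable_norm_mul_pow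
    (lt_of_lt_of_le (by exact_mod_cast hq₁) binomialSeries_radius_ge_one)
  simpa [binomialSeries, FormalMultilinearSeries.ofScalars_norm, genChoose_eq_ringChoose] using this

theorem integrableOn_Ioi_pow_mul_exp_neg_mul (m : ℕ) {l x : ℝ} (hl : 0 < l) (hx : 0 ≤ x) :
    IntegrableOn (fun t => t ^ m * exp (-l * t)) (Ioi x) := by
  have hGamma : IntegrableOn (fun u => u ^ m * exp (-u)) (Ioi (l * x)) := by
    refine ((GammaIntegral_convergent (s := m + 1) (by positivity)).mono_set
      (Ioi_subset_Ioi (by positivity))).congr_fun (fun u _ => ?_) measurableSet_Ioi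
    simp only [add_sub_cancel_right, rpow_natCast, mul_comm]
  have : IntegrableOn (fun t => (l ^ m)⁻¹ * ((l * t) ^ m * exp (-(l * t)))) (Ioi x) :=
    ((integrableOn_Ioi_comp_mul_left_iff _ x hl).mpr hGamma).const_mul _
  refine this.congr_fun (fun t _ => ?_) measurableSet_Ioi
  field_simp
  ring_nf

theorem integral_Ioi_pow_mul_exp_neg_mul (m : ℕ) {l : ℝ} (hl : 0 < l) (x : ℝ) :
    ∫ t in Ioi x, t ^ m * exp (-l * t) = uGamma (m + 1) (l * x) / l ^ ((m : ℝ) + 1) := by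
  have h := integral_comp_mul_left_Ioi (fun u => u ^ m * exp (-u)) x hl
  simp only [mul_pow, ← neg_mul, mul_assoc, integral_const_mul, smul_eq_mul] at h
  have hlm : l ^ m ≠ 0 := by positivity
  simp only [uGamma, add_sub_cancel_right, rpow_natCast]
  rw [← Nat.cast_add_one, rpow_natCast, pow_succ]
  field_simp at h ⊢
  linear_combination h

noncomputable def xgammaSurvival (θ t : ℝ) : ℝ :=
  (1 + θ + θ * t + θ ^ 2 * t ^ 2 / 2) * exp (-θ * t) / (1 + θ)

theorem U_eq_one_sub_xgammaSurvival (θ t : ℝ) : U θ t = 1 - xgammaSurvival θ t := rfl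

theorem xgammaSurvival_zero {θ : ℝ} (hθ : 1 + θ ≠ 0) : xgammaSurvival θ 0 = 1 := by
  simp [xgammaSurvival, div_self hθ]

theorem hasDerivAt_xgammaSurvival (θ t : ℝ) :
    HasDerivAt (xgammaSurvival θ)
      (-(θ ^ 2 / (1 + θ) * (1 + θ * t ^ 2 / 2) * exp (-θ * t))) t := by
  have hexp : HasDerivAt (fun t => exp (-θ * t)) (-θ * exp (-θ * t)) t := by
    simpa [mul_comm] using ((hasDerivAt_id t).const_mul (-θ)).exp
  have hpoly : HasDerivAt (fun t => 1 + θ + θ * t + θ ^ 2 * t ^ 2 / 2) (θ + θ ^ 2 * t) t :=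
    ((((hasDerivAt_id t).const_mul θ).const_add (1 + θ)).add
      (((hasDerivAt_pow 2 t).const_mul (θ ^ 2)).div_const 2)).congr_deriv (by simp; ring)
  exact ((hpoly.mul hexp).div_const (1 + θ)).congr_deriv (by ring)

theorem xgammaSurvival_strictAnti {θ : ℝ} (hθ : 0 < θ) : StrictAnti (xgammaSurvival θ) :=
  strictAnti_of_deriv_neg fun t => by
    rw [(hasDerivAt_xgammaSurvival θ t).deriv, neg_neg_iff_pos]
    positivity

theorem xgammaSurvival_pos {θ : ℝ} (hθ : 0 < θ) (t : ℝ) : 0 < xgammaSurvival θ t := by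
  have : 0 < 1 + θ + θ * t + θ ^ 2 * t ^ 2 / 2 := by nlinarith [sq_nonneg (θ * t + 1)]
  unfold xgammaSurvival
  positivity

theorem xgammaSurvival_lt_one {θ t : ℝ} (hθ : 0 < θ) (ht : 0 < t) : xgammaSurvival θ t < 1 :=
  xgammaSurvival_zero (by positivity) ▸ xgammaSurvival_strictAnti hθ ht

theorem one_add_add_mul_add_sq_div_two_pow (θ t : ℝ) (i : ℕ) :
    (1 + θ + θ * t + θ ^ 2 * t ^ 2 / 2) ^ i =
      ∑ j ∈ Finset.range (i + 1), ∑ k ∈ Finset.range (j + 1), ∑ l ∈ Finset.range (k + 1),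
        (i.choose j * j.choose k * k.choose l : ℝ) * θ ^ j * (θ / 2) ^ l * t ^ (k + l) := by
  rw [show 1 + θ + θ * t + θ ^ 2 * t ^ 2 / 2 = θ * (t * (θ / 2 * t + 1) + 1) + 1 by ring]
  simp only [add_pow, one_pow, mul_one, mul_pow, Finset.sum_mul, Finset.mul_sum]
  refine Finset.sum_congr rfl fun j _ => Finset.sum_congr rfl fun k _ =>
    Finset.sum_congr rfl fun l _ => ?_
  ring

theorem pow_mul_exp_mul_xgammaSurvival_pow (θ t : ℝ) (m i : ℕ) :
    t ^ m * exp (-θ * t) * xgammaSurvival θ t ^ i =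
      ∑ j ∈ Finset.range (i + 1), ∑ k ∈ Finset.range (j + 1), ∑ l ∈ Finset.range (k + 1),
        (i.choose j * j.choose k * k.choose l : ℝ) * θ ^ j * (θ / 2) ^ l / (1 + θ) ^ i *
          (t ^ (m + (k + l)) * exp (-(θ * i + θ) * t)) := by
  have hexp : exp (-(θ * i + θ) * t) = exp (-θ * t) ^ i * exp (-θ * t) := by
    rw [← exp_nat_mul, ← exp_add]
    ring_nf
  simp only [xgammaSurvival, div_pow, mul_pow, one_add_add_mul_add_sq_div_two_pow, hexp,
    Finset.sum_mul, Finset.mul_sum, Finset.sum_div]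
  refine Finset.sum_congr rfl fun j _ => Finset.sum_congr rfl fun k _ =>
    Finset.sum_congr rfl fun l _ => ?_
  ring

section

variable {θ x : ℝ}

theorem integrableOn_pow_mul_exp_mul_xgammaSurvival_pow (hθ : 0 < θ) (hx : 0 ≤ x) (m i : ℕ) :
    IntegrableOn (fun t => t ^ m * exp (-θ * t) * xgammaSurvival θ t ^ i) (Ioi x) := by
  simp_rw [pow_mul_exp_mul_xgammaSurvival_pow]
  refine integrable_finsetSum _ fun j _ => integrable_finsetSum _ fun k _ =>
    integrable_finsetSum _ fun l _ => ?_
  exact (integrableOn_Ioi_pow_mul_exp_neg_mul _ (by positivity) hx).const_mul _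

theorem integral_pow_mul_exp_mul_xgammaSurvival_pow (hθ : 0 < θ) (hx : 0 ≤ x) (m i : ℕ) :
    ∫ t in Ioi x, t ^ m * exp (-θ * t) * xgammaSurvival θ t ^ i =
      ∑ j ∈ Finset.range (i + 1), ∑ k ∈ Finset.range (j + 1), ∑ l ∈ Finset.range (k + 1),
        (i.choose j * j.choose k * k.choose l : ℝ) * θ ^ j * (θ / 2) ^ l *
          uGamma (m + k + l + 1) (x * (θ * i + θ)) /
          ((1 + θ) ^ i * (θ * i + θ) ^ ((m : ℝ) + k + l + 1)) := by
  have hl : 0 < θ * i + θ := by positivity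
  have hint (k l : ℕ) := integrableOn_Ioi_pow_mul_exp_neg_mul (m + (k + l)) hl hx
  simp_rw [pow_mul_exp_mul_xgammaSurvival_pow]
  rw [integral_finsetSum _ fun j _ => integrable_finsetSum _ fun k _ =>
    integrable_finsetSum _ fun l _ => (hint k l).const_mul _]
  refine Finset.sum_congr rfl fun j _ => ?_
  rw [integral_finsetSum _ fun k _ => integrable_finsetSum _ fun l _ => (hint k l).const_mul _]
  refine Finset.sum_congr rfl fun k _ => ?_
  rw [integral_finsetSum _ fun l _ => (hint k l).const_mul _]
  refine Finset.sum_congr rfl fun l _ => ?_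
  rw [integral_const_mul, integral_Ioi_pow_mul_exp_neg_mul _ hl]
  push_cast
  ring_nf

theorem hasSum_U_rpow (hθ : 0 < θ) {t : ℝ} (ht : 0 < t) (a : ℝ) :
    HasSum (fun i => genChoose a i * (-xgammaSurvival θ t) ^ i) (U θ t ^ a) := by
  have hS : |-xgammaSurvival θ t| < 1 := by
    rw [abs_neg, abs_of_pos (xgammaSurvival_pos hθ t)]
    exact xgammaSurvival_lt_one hθ ht
  simpa [U_eq_one_sub_xgammaSurvival, sub_eq_add_neg] using hasSum_genChoose_mul_pow a hS

theorem abs_genChoose_mul_neg_xgammaSurvival_pow_le (hθ : 0 < θ) {t : ℝ} (hxt : x ≤ t)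
    (a : ℝ) (i : ℕ) :
    |genChoose a i * (-xgammaSurvival θ t) ^ i| ≤ |genChoose a i| * xgammaSurvival θ x ^ i := by
  rw [abs_mul, abs_pow, abs_neg, abs_of_pos (xgammaSurvival_pos hθ t)]
  gcongr
  · exact (xgammaSurvival_pos hθ t).le
  · exact (xgammaSurvival_strictAnti hθ).antitone hxt

theorem abs_U_rpow_le (hθ : 0 < θ) (hx : 0 < x) {t : ℝ} (hxt : x ≤ t) (a : ℝ) :
    |U θ t ^ a| ≤ ∑' i, |genChoose a i| * xgammaSurvival θ x ^ i :=
  (hasSum_U_rpow hθ (hx.trans_le hxt) a).norm_le_of_bounded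
    (summable_abs_genChoose_mul_pow a (xgammaSurvival_pos hθ x).le
      (xgammaSurvival_lt_one hθ hx)).hasSum
    (abs_genChoose_mul_neg_xgammaSurvival_pow_le hθ hxt a)

theorem integrableOn_pow_mul_exp_mul_U_rpow (hθ : 0 < θ) (hx : 0 < x) (m : ℕ) (a : ℝ) :
    IntegrableOn (fun t => t ^ m * exp (-θ * t) * U θ t ^ a) (Ioi x) := by
  have hU : Measurable (U θ) := by unfold U; fun_prop
  refine Integrable.mono' ((integrableOn_Ioi_pow_mul_exp_neg_mul m hθ hx.le).mul_const
    (∑' i, |genChoose a i| * xgammaSurvival θ x ^ i)) (by fun_prop) ?_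
  refine (ae_restrict_iff' measurableSet_Ioi).mpr (Eventually.of_forall fun t ht => ?_)
  have ht₀ : 0 < t := hx.trans ht
  rw [norm_mul, Real.norm_of_nonneg (by positivity)]
  exact mul_le_mul_of_nonneg_left (abs_U_rpow_le hθ hx ht.le a) (by positivity)

theorem integral_pow_mul_exp_mul_U_rpow (hθ : 0 < θ) (hx : 0 < x) (α : ℝ) (m : ℕ) :
    ∫ t in Ioi x, t ^ m * exp (-θ * t) * U θ t ^ (α - 1) = L1 α θ m θ x := by
  set F : ℕ → ℝ → ℝ := fun i t =>
    t ^ m * exp (-θ * t) * (genChoose (α - 1) i * (-xgammaSurvival θ t) ^ i)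
  have hF_eq (i : ℕ) (t : ℝ) : F i t =
      genChoose (α - 1) i * (-1) ^ i * (t ^ m * exp (-θ * t) * xgammaSurvival θ t ^ i) := by
    rw [neg_pow]
    ring
  have hF_int (i : ℕ) : IntegrableOn (F i) (Ioi x) :=
    ((integrableOn_pow_mul_exp_mul_xgammaSurvival_pow hθ hx.le m i).const_mul _).congr
      (Eventually.of_forall fun t => (hF_eq i t).symm)
  have hF_norm (i : ℕ) : ∫ t in Ioi x, ‖F i t‖ ≤
      (∫ t in Ioi x, t ^ m * exp (-θ * t)) * (|genChoose (α - 1) i| * xgammaSurvival θ x ^ i) := by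
    rw [← integral_mul_const]
    refine setIntegral_mono_on (hF_int i).norm
      ((integrableOn_Ioi_pow_mul_exp_neg_mul m hθ hx.le).mul_const _) measurableSet_Ioi
      fun t ht => ?_
    have ht₀ : 0 < t := hx.trans ht
    rw [norm_mul, Real.norm_of_nonneg (by positivity), Real.norm_eq_abs]
    exact mul_le_mul_of_nonneg_left
      (abs_genChoose_mul_neg_xgammaSurvival_pow_le hθ ht.le (α - 1) i) (by positivity)
  have hF_sum : Summable fun i => ∫ t in Ioi x, ‖F i t‖ :=
    .of_nonneg_of_le (fun i => integral_nonneg fun t => norm_nonneg _) hF_norm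
      ((summable_abs_genChoose_mul_pow (α - 1) (xgammaSurvival_pos hθ x).le
        (xgammaSurvival_lt_one hθ hx)).mul_left _)
  have hF_tsum : ∀ t ∈ Ioi x, ∑' i, F i t = t ^ m * exp (-θ * t) * U θ t ^ (α - 1) :=
    fun t ht => ((hasSum_U_rpow hθ (hx.trans ht) (α - 1)).mul_left _).tsum_eq
  rw [← setIntegral_congr_fun measurableSet_Ioi hF_tsum,
    ← (hasSum_integral_of_summable_integral_norm hF_int hF_sum).tsum_eq, L1]
  refine tsum_congr fun i => ?_
  simp only [hF_eq, integral_const_mul,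
    integral_pow_mul_exp_mul_xgammaSurvival_pow hθ hx.le, Finset.mul_sum]
  refine Finset.sum_congr rfl fun j _ => Finset.sum_congr rfl fun k _ =>
    Finset.sum_congr rfl fun l _ => ?_
  ring

end

theorem exgd_conditional_moment_general (α θ : ℝ) (hθ : 0 < θ) (n : ℕ)
    (x : ℝ) (hx : 0 < x) :
    (∫ t in Set.Ioi x, t ^ n * exgdPdf α θ t) =
      α * θ ^ 2 / (1 + θ) * (L1 α θ n θ x + θ / 2 * L2 α θ n θ x) ∧
    (∫ t in Set.Ioi x, t ^ n * exgdPdf α θ t) / (1 - (U θ x) ^ α) =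
      α * θ ^ 2 / (1 + θ) * (L1 α θ n θ x + θ / 2 * L2 α θ n θ x) /
        (1 - (U θ x) ^ α) := by
  have hmoment : ∫ t in Ioi x, t ^ n * exgdPdf α θ t =
      α * θ ^ 2 / (1 + θ) * ((∫ t in Ioi x, t ^ n * exp (-θ * t) * U θ t ^ (α - 1)) +
        θ / 2 * ∫ t in Ioi x, t ^ (n + 2) * exp (-θ * t) * U θ t ^ (α - 1)) := by
    rw [← integral_const_mul (θ / 2), ← integral_add
      (integrableOn_pow_mul_exp_mul_U_rpow hθ hx n _)
      ((integrableOn_pow_mul_exp_mul_U_rpow hθ hx (n + 2) _).const_mul _),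
      ← integral_const_mul]
    refine integral_congr_ae (Eventually.of_forall fun t => ?_)
    simp only [exgdPdf]
    ring
  have hL2 : L2 α θ n θ x = L1 α θ ((n + 2 : ℕ) : ℝ) θ x := by
    rw [L2, Nat.cast_add, Nat.cast_two]
  rw [hmoment, integral_pow_mul_exp_mul_U_rpow hθ hx, integral_pow_mul_exp_mul_U_rpow hθ hx, hL2]
  exact ⟨rfl, rfl⟩

theorem exgd_conditional_moment (α θ : ℝ) (hα : 0 < α) (hθ : 0 < θ) (n : ℕ)
    (x : ℝ) (hx : 0 < x) :
    (∫ t in Set.Ioi x, t ^ n * exgdPdf α θ t) =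
      α * θ ^ 2 / (1 + θ) * (L1 α θ n θ x + θ / 2 * L2 α θ n θ x) ∧
    (∫ t in Set.Ioi x, t ^ n * exgdPdf α θ t) / (1 - (U θ x) ^ α) =
      α * θ ^ 2 / (1 + θ) * (L1 α θ n θ x + θ / 2 * L2 α θ n θ x) /
        (1 - (U θ x) ^ α) :=
  exgd_conditional_moment_general α θ hθ n x hx
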